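/- For every n-tuple e = (e₁,...,eₙ) of little m-cubes with pairwise disjoint interiors, there exists λ ∈ (0,1] such that the scaled configuration λe = (λe₁,...,λeₙ) is small, i.e., there exist configurations f ∈ C_k(p) and g ∈ C_ℓ(q) (with k + ℓ = m) such that each λeᵢ lies in the interior of exactly one product f_h × g_j, and each f_h × g_j contains at most one λeᵢ. -/

import Mathlib

/-- The closed box which is the image of the unit cube under `x ↦ a + b * x`. -/
def closedBox {k : ℕ} (a b : Fin k → ℝ) : Set (Fin k → ℝ) :=
  {x | ∀ i, a i ≤ x i ∧ x i ≤ a i + b i}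

/-- The open box (interior of `closedBox`). -/
def openBox {k : ℕ} (a b : Fin k → ℝ) : Set (Fin k → ℝ) :=
  {x | ∀ i, a i < x i ∧ x i < a i + b i}

/-- Lower corner of the cube `(a,b)` scaled by `λ` about its center. -/
noncomputable def scaleA {k : ℕ} (a b : Fin k → ℝ) (lam : ℝ) : Fin k → ℝ :=
  fun i => a i + b i * (1 - lam) / 2

/-- Side lengths of the cube `(a,b)` scaled by `λ`. -/
noncomputable def scaleB {k : ℕ} (b : Fin k → ℝ) (lam : ℝ) : Fin k → ℝ :=
  fun i => lam * b i

private lemma exists_pos_le_forall {α : Type*} [Finite α] (f : α → ℝ) (hf : ∀ x, 0 < f x) :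
    ∃ ε : ℝ, 0 < ε ∧ ∀ x, ε ≤ f x := by
  rcases isEmpty_or_nonempty α with h | h
  · exact ⟨1, one_pos, fun x => isEmptyElim x⟩
  · obtain ⟨x₀, h₀⟩ := Finite.exists_min f
    exact ⟨f x₀, hf x₀, h₀⟩

private lemma aux_config {n k : ℕ} (ε : ℝ) (hε : 0 < ε) (w : Fin n → Fin k → ℝ)
    (hbd : ∀ i j, 3*ε ≤ w i j ∧ w i j ≤ 1 - 3*ε)
    (hsep : ∀ i i' j, w i j ≠ w i' j → 3*ε ≤ |w i j - w i' j|) :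
    ∃ (p : ℕ) (fa : Fin p → Fin k → ℝ) (idx : Fin n → Fin p),
      (∀ h, closedBox (fa h) (fun _ => 2*ε) ⊆ closedBox (fun _ => (0:ℝ)) (fun _ => 1)) ∧
      (Pairwise fun h h' => Disjoint (openBox (fa h) (fun _ => 2*ε)) (openBox (fa h') (fun _ => 2*ε))) ∧
      (∀ i j, fa (idx i) j = w i j - ε) ∧
      (∀ i h, (∀ j, fa h j < w i j ∧ w i j < fa h j + 2*ε) → h = idx i) := by
  classical
  set S : Finset (Fin k → ℝ) := Finset.image w Finset.univ with hS
  set F : Fin S.card → Fin k → ℝ := fun h => (S.equivFin.symm h : Fin k → ℝ) with hF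
  have hFmem : ∀ h, ∃ i, w i = F h := by
    intro h
    have h2 := (S.equivFin.symm h).2
    have h3 : (S.equivFin.symm h : Fin k → ℝ) ∈ Finset.image w Finset.univ := h2
    obtain ⟨i, _, hi⟩ := Finset.mem_image.mp h3
    exact ⟨i, hi⟩
  have hFinj : Function.Injective F := by
    intro h h' hh
    exact S.equivFin.symm.injective (Subtype.ext hh)
  set idx : Fin n → Fin S.card :=
    fun i => S.equivFin ⟨w i, by rw [hS]; exact Finset.mem_image_of_mem w (Finset.mem_univ i)⟩
    with hidx
  have hFidx : ∀ i, F (idx i) = w i := by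
    intro i
    simp [hF, hidx]
  have hFsep : ∀ h h' j, F h j ≠ F h' j → 3*ε ≤ |F h j - F h' j| := by
    intro h h' j hne
    obtain ⟨i, hi⟩ := hFmem h
    obtain ⟨i', hi'⟩ := hFmem h'
    rw [← hi, ← hi'] at hne ⊢
    exact hsep i i' j hne
  refine ⟨S.card, fun h j => F h j - ε, idx, ?_, ?_, ?_, ?_⟩
  · intro h x hx j
    obtain ⟨i, hi⟩ := hFmem h
    have h1 := hx j
    have h2 := hbd i j
    rw [hi] at h2
    simp only at h1
    show (0:ℝ) ≤ x j ∧ x j ≤ 0 + 1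
    exact ⟨by linarith [h1.1, h2.1], by linarith [h1.2, h2.2]⟩
  · intro h h' hne
    have hFne : ∃ j, F h j ≠ F h' j := by
      by_contra hcon
      push_neg at hcon
      exact hne (hFinj (funext hcon))
    obtain ⟨j, hj⟩ := hFne
    have hs := hFsep h h' j hj
    rw [Set.disjoint_left]
    intro z hz hz'
    have h1 := hz j
    have h2 := hz' j
    simp only at h1 h2
    rcases abs_cases (F h j - F h' j) with ⟨he, _⟩ | ⟨he, _⟩ <;> rw [he] at hs <;>
      linarith [h1.1, h1.2, h2.1, h2.2]
  · intro i j
    show F (idx i) j - ε = w i j - ε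
    rw [hFidx]
  · intro i h hcond
    have hkey : ∀ j, F h j = w i j := by
      intro j
      by_contra hne
      have hs := hFsep h (idx i) j (by rw [hFidx]; exact hne)
      rw [hFidx] at hs
      have h1 := hcond j
      simp only at h1
      rcases abs_cases (F h j - w i j) with ⟨he, _⟩ | ⟨he, _⟩ <;> rw [he] at hs <;>
        linarith [h1.1, h1.2]
    apply hFinj
    funext j
    rw [hkey j]
    exact (congrFun (hFidx i) j).symm

/-- Every configuration `e ∈ C_{k+ℓ}(n)` of little `(k+ℓ)`-cubes with pairwise disjoint
interiors can be scaled by some `λ ∈ (0,1]` about the centers so as to become *small*: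
there are configurations `f ∈ C_k(p)` and `g ∈ C_ℓ(q)` such that each `λeᵢ` lies in the
interior of exactly one product `f_h × g_j`, and each product `f_h × g_j` contains at most
one of the `λeᵢ`. -/
theorem exists_scale_small (k l n : ℕ) (a b : Fin n → Fin (k + l) → ℝ)
    (hb : ∀ i j, 0 < b i j)
    (hsub : ∀ i, closedBox (a i) (b i) ⊆ closedBox (fun _ => (0 : ℝ)) (fun _ => 1))
    (hdisj : Pairwise fun i i' => Disjoint (openBox (a i) (b i)) (openBox (a i') (b i'))) :
    ∃ lam : ℝ, 0 < lam ∧ lam ≤ 1 ∧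
      ∃ (p q : ℕ) (fa fb : Fin p → Fin k → ℝ) (ga gb : Fin q → Fin l → ℝ),
        (∀ h j, 0 < fb h j) ∧
        (∀ h, closedBox (fa h) (fb h) ⊆ closedBox (fun _ => (0 : ℝ)) (fun _ => 1)) ∧
        (Pairwise fun h h' => Disjoint (openBox (fa h) (fb h)) (openBox (fa h') (fb h'))) ∧
        (∀ j i, 0 < gb j i) ∧
        (∀ j, closedBox (ga j) (gb j) ⊆ closedBox (fun _ => (0 : ℝ)) (fun _ => 1)) ∧
        (Pairwise fun j j' => Disjoint (openBox (ga j) (gb j)) (openBox (ga j') (gb j'))) ∧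
        (∀ i : Fin n, ∃! hj : Fin p × Fin q,
          closedBox (scaleA (a i) (b i) lam) (scaleB (b i) lam)
            ⊆ openBox (Fin.append (fa hj.1) (ga hj.2)) (Fin.append (fb hj.1) (gb hj.2))) ∧
        (∀ hj : Fin p × Fin q, ∀ i i' : Fin n,
          closedBox (scaleA (a i) (b i) lam) (scaleB (b i) lam)
            ⊆ closedBox (Fin.append (fa hj.1) (ga hj.2)) (Fin.append (fb hj.1) (gb hj.2)) →
          closedBox (scaleA (a i') (b i') lam) (scaleB (b i') lam)
            ⊆ closedBox (Fin.append (fa hj.1) (ga hj.2)) (Fin.append (fb hj.1) (gb hj.2)) →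
          i = i') := by
  classical
  -- the centers
  set c : Fin n → Fin (k + l) → ℝ := fun i j => a i j + b i j / 2 with hc
  -- basic bounds
  have hcorner : ∀ i j, 0 ≤ a i j ∧ a i j + b i j ≤ 1 := by
    intro i j
    have hm1 : a i ∈ closedBox (a i) (b i) := fun j' => ⟨le_rfl, by linarith [hb i j']⟩
    have hm2 : (fun j' => a i j' + b i j') ∈ closedBox (a i) (b i) := by
      intro j'
      show a i j' ≤ a i j' + b i j' ∧ a i j' + b i j' ≤ a i j' + b i j'
      exact ⟨by linarith [hb i j'], le_rfl⟩
    have h1 := hsub i hm1 j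
    have h2 := hsub i hm2 j
    simp only at h1 h2
    exact ⟨by linarith [h1.1], by linarith [h2.2]⟩
  have hb1 : ∀ i j, b i j ≤ 1 := by
    intro i j
    have := hcorner i j
    linarith [this.1, this.2]
  have hcmem : ∀ i, c i ∈ openBox (a i) (b i) := by
    intro i j
    simp only [hc]
    constructor <;> linarith [hb i j]
  -- centers are distinct
  have hcne : ∀ i i', i ≠ i' → ∃ j, c i j ≠ c i' j := by
    intro i i' hne
    by_contra hcon
    push_neg at hcon
    have hcc : c i' ∈ openBox (a i) (b i) := by
      intro j
      rw [← hcon j]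
      exact hcmem i j
    exact (Set.disjoint_left.mp (hdisj hne) hcc) (hcmem i')
  -- the separation constant
  obtain ⟨εb, hεb, hεble⟩ := exists_pos_le_forall
    (fun x : Fin n × Fin n × Fin (k + l) =>
      min (min (c x.1 x.2.2) (1 - c x.1 x.2.2))
        (if c x.1 x.2.2 = c x.2.1 x.2.2 then 1 else |c x.1 x.2.2 - c x.2.1 x.2.2|))
    (by
      rintro ⟨i, i', j⟩
      simp only
      have h1 := hcorner i j
      have h2 := hb i j
      refine lt_min (lt_min ?_ ?_) ?_
      · simp only [hc]; linarith [h1.1]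
      · simp only [hc]; linarith [h1.2]
      · split
        · exact one_pos
        · next hne => exact abs_pos.mpr (sub_ne_zero.mpr hne))
  set ε : ℝ := εb / 3 with hεdef
  have hε : 0 < ε := by positivity
  have hεc : ∀ i j, 3 * ε ≤ c i j ∧ c i j ≤ 1 - 3 * ε := by
    intro i j
    have h := hεble (i, i, j)
    simp only at h
    rw [le_min_iff, le_min_iff] at h
    exact ⟨by linarith [h.1.1], by linarith [h.1.2]⟩
  have hεsep : ∀ i i' j, c i j ≠ c i' j → 3 * ε ≤ |c i j - c i' j| := by
    intro i i' j hne
    have h := hεble (i, i', j)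
    simp only at h
    rw [le_min_iff] at h
    have h2 := h.2
    rw [if_neg hne] at h2
    linarith
  -- apply aux_config to the two projections
  obtain ⟨p, fa, idxf, Hf1, Hf2, Hf3, Hf4⟩ := aux_config ε hε
    (fun i j => c i (Fin.castAdd l j))
    (fun i j => hεc i (Fin.castAdd l j))
    (fun i i' j hne => hεsep i i' (Fin.castAdd l j) hne)
  obtain ⟨q, ga, idxg, Hg1, Hg2, Hg3, Hg4⟩ := aux_config ε hε
    (fun i j => c i (Fin.natAdd k j))
    (fun i j => hεc i (Fin.natAdd k j))
    (fun i i' j hne => hεsep i i' (Fin.natAdd k j) hne)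
  -- the scaling factor
  set lam : ℝ := min 1 ε with hlamdef
  have hlam0 : 0 < lam := lt_min one_pos hε
  have hlam1 : lam ≤ 1 := min_le_left _ _
  have hlamb : ∀ i j, lam * b i j ≤ ε := by
    intro i j
    calc lam * b i j ≤ ε * 1 :=
          mul_le_mul (min_le_right _ _) (hb1 i j) (hb i j).le hε.le
      _ = ε := mul_one ε
  -- membership in the scaled cube
  have hsc : ∀ i (x : Fin (k + l) → ℝ),
      x ∈ closedBox (scaleA (a i) (b i) lam) (scaleB (b i) lam) ↔
      ∀ j, c i j - lam * b i j / 2 ≤ x j ∧ x j ≤ c i j + lam * b i j / 2 := by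
    intro i x
    have e : ∀ j, a i j + b i j * (1 - lam) / 2 = c i j - lam * b i j / 2 := by
      intro j; simp only [hc]; ring
    constructor
    · intro hx j
      have h1 := hx j
      simp only [scaleA, scaleB] at h1
      rw [e j] at h1
      exact ⟨h1.1, by linarith [h1.2]⟩
    · intro hx j
      have h1 := hx j
      show a i j + b i j * (1 - lam) / 2 ≤ x j ∧ x j ≤ a i j + b i j * (1 - lam) / 2 + lam * b i j
      rw [e j]
      exact ⟨h1.1, by linarith [h1.2]⟩
  -- the centers belong to their scaled cubes
  have hcc : ∀ i, c i ∈ closedBox (scaleA (a i) (b i) lam) (scaleB (b i) lam) := by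
    intro i
    rw [hsc]
    intro j
    have : 0 ≤ lam * b i j := mul_nonneg hlam0.le (hb i j).le
    constructor <;> linarith
  clear_value c ε lam
  refine ⟨lam, hlam0, hlam1, p, q, fa, fun _ _ => 2 * ε, ga, fun _ _ => 2 * ε,
    fun _ _ => by positivity, Hf1, Hf2, fun _ _ => by positivity, Hg1, Hg2, ?_, ?_⟩
  · -- exactly one product containing the scaled cube
    intro i
    refine ⟨(idxf i, idxg i), ?_, ?_⟩
    · intro x hx
      have hx' := (hsc i x).mp hx
      intro j
      induction j using Fin.addCases with
      | left j₀ =>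
        simp only [Fin.append_left]
        have h1 := hx' (Fin.castAdd l j₀)
        have h2 := Hf3 i j₀
        have h3 := hlamb i (Fin.castAdd l j₀)
        rw [h2]
        exact ⟨by linarith [h1.1, h3, hε], by linarith [h1.2, h3, hε]⟩
      | right j₀ =>
        simp only [Fin.append_right]
        have h1 := hx' (Fin.natAdd k j₀)
        have h2 := Hg3 i j₀
        have h3 := hlamb i (Fin.natAdd k j₀)
        rw [h2]
        exact ⟨by linarith [h1.1, h3, hε], by linarith [h1.2, h3, hε]⟩
    · rintro ⟨h', j'⟩ hsub'
      have hopen := hsub' (hcc i)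
      have hf : h' = idxf i := by
        apply Hf4 i
        intro j₀
        have h1 := hopen (Fin.castAdd l j₀)
        simp only [Fin.append_left] at h1
        exact h1
      have hg : j' = idxg i := by
        apply Hg4 i
        intro j₀
        have h1 := hopen (Fin.natAdd k j₀)
        simp only [Fin.append_right] at h1
        exact h1
      simp only [Prod.mk.injEq]
      exact ⟨hf, hg⟩
  · -- at most one scaled cube per product
    rintro ⟨h', j'⟩ i i' h1 h2
    by_contra hne
    obtain ⟨j, hj0⟩ := hcne i i' hne
    have hs := hεsep i i' j hj0
    have e1 := h1 (hcc i) j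
    have e2 := h2 (hcc i') j
    have hw : ∀ jj : Fin (k + l),
        Fin.append (fun _ : Fin k => 2 * ε) (fun _ : Fin l => 2 * ε) jj = 2 * ε := by
      intro jj
      induction jj using Fin.addCases with
      | left j₀ => rw [Fin.append_left]
      | right j₀ => rw [Fin.append_right]
    simp only at e1 e2
    rw [hw j] at e1 e2
    rcases abs_cases (c i j - c i' j) with ⟨he, _⟩ | ⟨he, _⟩ <;> rw [he] at hs <;>
      linarith [e1.1, e1.2, e2.1, e2.2, hε]
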